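/- Let a be measurable with essential infimum ξ ≤ 0, and suppose max(0, ξ+1/H_ξ) < u < E. Let t̃_u be the unique zero of w_u in (0, u/(u-ξ)). Then t̃_u < F({x : a(x) ≠ 0}), i.e., t̃_u is strictly less than the probability that a(x) ≠ 0. -/

import Mathlib

open MeasureTheory Real Filter Set

/-! Writing `D = a t - u t + u`, which is bounded below by `u - t (u - ξ) > 0`, the integrand of
`w_u(t)` is `1/t - u/(t D)`: it equals `-1/(1-t)` where `a = 0` and is `< 1/t` elsewhere.
Integrating, `0 = w_u(t) < p/t - (1-p)/(1-t) = (p - t)/(t(1-t))` with `p = F(a ≠ 0)`,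
provided `p > 0`; and `p = 0` would force `w_u(t) = -1/(1-t) < 0`. -/

namespace MeasureTheory

variable {Ω : Type*} [MeasurableSpace Ω] {μ : Measure Ω}

theorem integral_lt_integral_of_ae_le_of_measure_ne_zero {f g : Ω → ℝ} (hf : Integrable f μ)
    (hg : Integrable g μ) (hle : f ≤ᵐ[μ] g) (hlt : μ {x | f x < g x} ≠ 0) :
    ∫ x, f x ∂μ < ∫ x, g x ∂μ := by
  rw [← sub_pos, ← integral_sub hg hf,
    integral_pos_iff_support_of_nonneg_ae (hle.mono fun x => sub_nonneg.2) (hg.sub hf)]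
  exact pos_iff_ne_zero.2 (mt (measure_mono_null fun x hx => (sub_pos.2 hx.out).ne') hlt)

theorem integral_lt_of_ae_lt_on_of_ae_le_off [IsFiniteMeasure μ] {s : Set Ω}
    (hs : MeasurableSet s) (hμs : μ s ≠ 0) {g : Ω → ℝ} (hg : Integrable g μ) {α β : ℝ}
    (hlt : ∀ᵐ x ∂μ, x ∈ s → g x < α) (hle : ∀ᵐ x ∂μ, x ∉ s → g x ≤ β) :
    ∫ x, g x ∂μ < μ.real s * α + μ.real sᶜ * β := by
  classical
  have hstep : ∫ x, s.piecewise (fun _ => α) (fun _ => β) x ∂μ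
      = μ.real s * α + μ.real sᶜ * β := by
    rw [integral_piecewise hs (integrableOn_const) (integrableOn_const), setIntegral_const,
      setIntegral_const, smul_eq_mul, smul_eq_mul]
  rw [← hstep]
  refine integral_lt_integral_of_ae_le_of_measure_ne_zero hg
    (Integrable.piecewise hs (integrable_const α).integrableOn (integrable_const β).integrableOn)
    ?_ ?_
  · filter_upwards [hlt, hle] with x hxs hxsc
    by_cases hx : x ∈ s
    · simpa [hx] using (hxs hx).le
    · simpa [hx] using hxsc hx
  · refine fun h0 => hμs (measure_mono_null_ae ?_ h0)
    filter_upwards [hlt] with x hx hxs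
    show g x < s.piecewise (fun _ => α) (fun _ => β) x
    rw [piecewise_eq_of_mem _ _ _ hxs]
    exact hx hxs

theorem lt_measureReal_of_integral_nonneg [IsProbabilityMeasure μ] {s : Set Ω}
    (hs : MeasurableSet s) {g : Ω → ℝ} (hg : Integrable g μ) {t : ℝ} (ht0 : 0 < t)
    (ht1 : t < 1) (hlt : ∀ᵐ x ∂μ, x ∈ s → g x < t⁻¹)
    (hle : ∀ᵐ x ∂μ, x ∉ s → g x ≤ -(1 - t)⁻¹) (hint : 0 ≤ ∫ x, g x ∂μ) :
    t < μ.real s := by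
  have h1t : 0 < 1 - t := sub_pos.2 ht1
  have hμs : μ s ≠ 0 := by
    intro h0
    have hg_le : g ≤ᵐ[μ] fun _ => -(1 - t)⁻¹ := by
      filter_upwards [hle, measure_eq_zero_iff_ae_notMem.1 h0] with x hx hxs using hx hxs
    have := integral_mono_ae hg (integrable_const _) hg_le
    simp only [integral_const, probReal_univ, one_smul] at this
    linarith [inv_pos.2 h1t]
  have key := integral_lt_of_ae_lt_on_of_ae_le_off hs hμs hg hlt hle
  have hstep : μ.real s * t⁻¹ + μ.real sᶜ * -(1 - t)⁻¹ = (μ.real s - t) / (t * (1 - t)) := by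
    rw [probReal_compl_eq_one_sub hs]
    field_simp
    ring
  rw [hstep] at key
  linarith [(div_pos_iff_of_pos_right (mul_pos ht0 h1t)).1 (hint.trans_lt key)]

end MeasureTheory

/-- The integrand of `w_u(t)`, as a function of the value `y` of `a`. -/
noncomputable def wIntegrand (u t y : ℝ) : ℝ := (y - u) / (y * t - u * t + u)

section wIntegrand

variable {u t y : ℝ}

theorem wIntegrand_eq_inv_sub (ht : t ≠ 0) (hD : y * t - u * t + u ≠ 0) :
    wIntegrand u t y = t⁻¹ - u / (t * (y * t - u * t + u)) := by
  unfold wIntegrand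
  set D := y * t - u * t + u with hD_def
  field_simp
  rw [hD_def]
  ring

theorem wIntegrand_lt_inv (hu : 0 < u) (ht : 0 < t) (hD : 0 < y * t - u * t + u) :
    wIntegrand u t y < t⁻¹ := by
  rw [wIntegrand_eq_inv_sub ht.ne' hD.ne']
  linarith [div_pos hu (mul_pos ht hD)]

theorem wIntegrand_zero (hu : u ≠ 0) (ht : t ≠ 1) : wIntegrand u t 0 = -(1 - t)⁻¹ := by
  have h1t : 1 - t ≠ 0 := sub_ne_zero.2 (Ne.symm ht)
  rw [wIntegrand, show 0 * t - u * t + u = u * (1 - t) by ring]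
  field_simp
  ring

theorem abs_wIntegrand_le {c : ℝ} (hu : 0 < u) (ht : 0 < t) (hc : 0 < c)
    (hD : c ≤ y * t - u * t + u) : |wIntegrand u t y| ≤ t⁻¹ + u / (t * c) := by
  have hD0 : 0 < y * t - u * t + u := hc.trans_le hD
  have hsmall : u / (t * (y * t - u * t + u)) ≤ u / (t * c) :=
    div_le_div_of_nonneg_left hu.le (mul_pos ht hc) (mul_le_mul_of_nonneg_left hD ht.le)
  rw [abs_le, wIntegrand_eq_inv_sub ht.ne' hD0.ne']
  constructor <;> linarith [inv_pos.2 ht, div_pos hu (mul_pos ht hD0)]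

theorem le_wIntegrand_denom {ξ : ℝ} (hy : ξ ≤ y) (ht : 0 < t) :
    u - t * (u - ξ) ≤ y * t - u * t + u := by
  nlinarith

theorem integrable_wIntegrand {Ω : Type*} [MeasurableSpace Ω] {μ : Measure Ω}
    [IsFiniteMeasure μ] {a : Ω → ℝ} (ha : Measurable a) {ξ : ℝ} (hge : ∀ᵐ x ∂μ, ξ ≤ a x)
    (hu : 0 < u) (ht : 0 < t) (htu : t * (u - ξ) < u) :
    Integrable (fun x => wIntegrand u t (a x)) μ := by
  have hmeas : Measurable fun x => wIntegrand u t (a x) :=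
    (ha.sub measurable_const).div
      (((ha.mul measurable_const).sub measurable_const).add measurable_const)
  refine Integrable.of_bound hmeas.aestronglyMeasurable (t⁻¹ + u / (t * (u - t * (u - ξ)))) ?_
  filter_upwards [hge] with x hx
  exact abs_wIntegrand_le hu ht (sub_pos.2 htu) (le_wIntegrand_denom hx ht)

end wIntegrand

theorem stmt9_general {Ω : Type*} [MeasurableSpace Ω] (μ : Measure Ω) [IsProbabilityMeasure μ]
    (a : Ω → ℝ) (hmeas : Measurable a) (ξ : ℝ) (hξ0 : ξ ≤ 0)
    (hge : ∀ᵐ x ∂μ, ξ ≤ a x)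
    (u : ℝ)
    (hu : max 0 (ξ + (∫⁻ x, ENNReal.ofReal ((a x - ξ)⁻¹) ∂μ)⁻¹.toReal) < u)
    (tu : ℝ) (htu : tu ∈ Ioo 0 (u / (u - ξ)))
    (hzero : ∫ x, (a x - u) / (a x * tu - u * tu + u) ∂μ = 0) :
    tu < (μ {x | a x ≠ 0}).toReal := by
  obtain ⟨ht0, htξ⟩ := htu
  have hu0 : 0 < u := (le_max_left _ _).trans_lt hu
  have huξ : 0 < u - ξ := by linarith
  have ht1 : tu < 1 := htξ.trans_le ((div_le_one huξ).2 (by linarith))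
  have htu : tu * (u - ξ) < u := (lt_div_iff₀ huξ).1 htξ
  have hD : ∀ᵐ x ∂μ, 0 < a x * tu - u * tu + u := hge.mono fun x hx =>
    (sub_pos.2 htu).trans_le (le_wIntegrand_denom hx ht0)
  refine lt_measureReal_of_integral_nonneg (hmeas (measurableSet_singleton 0).compl)
    (integrable_wIntegrand hmeas hge hu0 ht0 htu) ht0 ht1 ?_ ?_ hzero.ge
  · filter_upwards [hD] with x hx _ using wIntegrand_lt_inv hu0 ht0 hx
  · filter_upwards with x hx
    rw [not_not.1 hx]
    exact (wIntegrand_zero hu0.ne' ht1.ne).le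

/-- If `ξ ≤ 0` and `max(0, ξ+1/H_ξ) < u < E`, the unique zero `t̃_u` of `w_u`
in `(0, u/(u-ξ))` satisfies `t̃_u < F({x : a(x) ≠ 0})`. -/
theorem stmt9 {Ω : Type*} [MeasurableSpace Ω] (μ : Measure Ω) [IsProbabilityMeasure μ]
    (a : Ω → ℝ) (hmeas : Measurable a) (ξ : ℝ) (hξ0 : ξ ≤ 0)
    (hge : ∀ᵐ x ∂μ, ξ ≤ a x)
    (hinf : ∀ ε > 0, 0 < μ {x | a x < ξ + ε})
    (hnc : ∃ δ > 0, μ {x | a x < ξ + δ} < 1)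
    (u : ℝ)
    (hu : max 0 (ξ + (∫⁻ x, ENNReal.ofReal ((a x - ξ)⁻¹) ∂μ)⁻¹.toReal) < u)
    (huE : u < ∫ x, a x ∂μ ∨ ¬ Integrable a μ)
    (tu : ℝ) (htu : tu ∈ Ioo 0 (u / (u - ξ)))
    (hzero : ∫ x, (a x - u) / (a x * tu - u * tu + u) ∂μ = 0) :
    tu < (μ {x | a x ≠ 0}).toReal :=
  stmt9_general μ a hmeas ξ hξ0 hge u hu tu htu hzero
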